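/- arXiv:2512.06267 — 3 statements merged into one kernel-verified Lean document; each statement's English description precedes it below -/
import Mathlib

section
/- Let (S, K) be a convex geometry and W ⊆ Ex(S) a nonempty set of extreme points of S. Then the collection of maximally non-generating subsets of DNG(S, W) is exactly {S \ {v} : v ∈ W}. -/
/-- The convex closure operator `τ(A) = ⋂ {K ∈ 𝒦 : A ⊆ K}`. -/
def convexClosure {α : Type*} (𝒦 : Set (Set α)) (A : Set α) : Set α :=
  ⋂₀ {K | K ∈ 𝒦 ∧ A ⊆ K}

/-- The set of extreme points of `A`. -/
def extremePoints {α : Type*} (𝒦 : Set (Set α)) (A : Set α) : Set α :=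
  {a | a ∈ A ∧ a ∉ convexClosure 𝒦 (A \ {a})}

/-- `M` is maximally non-generating for `DNG(S, W)`: `W ⊄ τ(M)` and every strictly
larger subset generates. -/
def MaxNonGen {α : Type*} (𝒦 : Set (Set α)) (W M : Set α) : Prop :=
  ¬ W ⊆ convexClosure 𝒦 M ∧ ∀ N : Set α, M ⊂ N → W ⊆ convexClosure 𝒦 N

/-- If `W ⊆ Ex(S)` is a nonempty set of extreme points of the whole geometry, then the
maximally non-generating subsets of `DNG(S, W)` are exactly `{S \ {v} : v ∈ W}`. -/
theorem maxNonGen_eq_complement_singletons {α : Type*} [Fintype α] (𝒦 : Set (Set α))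
    (h1 : Set.univ ∈ 𝒦)
    (h2 : ∀ K L, K ∈ 𝒦 → L ∈ 𝒦 → K ∩ L ∈ 𝒦)
    (h3 : ∀ K ∈ 𝒦, K ≠ Set.univ → ∃ a ∉ K, K ∪ {a} ∈ 𝒦)
    (W : Set α) (hW : W.Nonempty) (hWex : W ⊆ extremePoints 𝒦 Set.univ) :
    {M : Set α | MaxNonGen 𝒦 W M} = {M : Set α | ∃ v ∈ W, M = Set.univ \ {v}} := by
  ext M
  simp only [Set.mem_setOf_eq]
  constructor
  · rintro ⟨hng, hmax⟩
    obtain ⟨v, hvW, hv⟩ := Set.not_subset.mp hng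
    have hvM : v ∉ M := fun h => hv (fun K hK => hK.2 h)
    refine ⟨v, hvW, ?_⟩
    have hsub : M ⊆ Set.univ \ {v} := fun x hx =>
      ⟨trivial, fun hxv => hvM (by rwa [Set.mem_singleton_iff.mp hxv] at hx)⟩
    rcases eq_or_lt_of_le hsub with h | h
    · exact h
    · exact absurd ((hmax _ h) hvW) (hWex hvW).2
  · rintro ⟨v, hvW, rfl⟩
    refine ⟨fun h => (hWex hvW).2 (h hvW), fun N hN => ?_⟩
    have hNu : N = Set.univ := by
      apply Set.eq_univ_of_forall
      intro x
      by_cases hx : x = v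
      · rcases Set.exists_of_ssubset hN with ⟨y, hyN, hy⟩
        have hyv : y = v := by by_contra h'; exact hy ⟨trivial, h'⟩
        rw [hx, ← hyv]; exact hyN
      · exact hN.1 ⟨trivial, hx⟩
    subst hNu
    exact fun w _ K hK => hK.2 trivial
end

section
/- Let (S, K) be a convex geometry with W ⊆ Ex(S) nonempty, and consider DNG(S, W). Then nim(DNG(S, W)) = 1 if |S| is even and nim(DNG(S, W)) = 0 if |S| is odd; equivalently, the first player wins if and only if |S| is even. -/
/-- Minimum excludant. -/
noncomputable def mex (A : Set ℕ) : ℕ := sInf {n | n ∉ A}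

/-- Nim value of a position in the avoidance game with legality predicate `legal`:
`nim(P) = mex` of the nim values of the legal options of `P`. -/
noncomputable def nimVal {α : Type*} [Fintype α] [DecidableEq α]
    (legal : Finset α → Prop) (P : Finset α) : ℕ :=
  mex {k | ∃ x, ∃ _ : x ∉ P, legal (insert x P) ∧ k = nimVal legal (insert x P)}
termination_by Pᶜ.card
decreasing_by
  simp only [Finset.compl_insert]
  exact Finset.card_erase_lt_of_mem (Finset.mem_compl.mpr (by assumption))

lemma subset_convexClosure {α : Type*} (𝒦 : Set (Set α)) (A : Set α) :
    A ⊆ convexClosure 𝒦 A := by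
  intro x hx
  simp only [convexClosure, Set.mem_sInter, Set.mem_setOf_eq]
  exact fun K hK => hK.2 hx

lemma convexClosure_mono {α : Type*} (𝒦 : Set (Set α)) {A B : Set α} (h : A ⊆ B) :
    convexClosure 𝒦 A ⊆ convexClosure 𝒦 B := by
  intro x hx
  simp only [convexClosure, Set.mem_sInter, Set.mem_setOf_eq] at *
  exact fun K hK => hx K ⟨hK.1, h.trans hK.2⟩

lemma legal_iff {α : Type*} [Fintype α] [DecidableEq α] (𝒦 : Set (Set α)) (W : Set α)
    (hWex : W ⊆ extremePoints 𝒦 Set.univ) (P : Finset α) :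
    (¬ W ⊆ convexClosure 𝒦 ↑P) ↔ ∃ w ∈ W, w ∉ P := by
  constructor
  · intro h
    by_contra hc
    push_neg at hc
    exact h (fun w hw => subset_convexClosure 𝒦 _ (hc w hw))
  · rintro ⟨w, hwW, hwP⟩ h
    have hex := (hWex hwW).2
    have hsub : (↑P : Set α) ⊆ Set.univ \ {w} := by
      intro x hx
      refine ⟨trivial, ?_⟩
      simp only [Set.mem_singleton_iff]
      rintro rfl
      exact hwP hx
    exact hex (convexClosure_mono 𝒦 hsub (h hwW))

lemma mex_empty : mex (∅ : Set ℕ) = 0 := by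
  simp [mex, Nat.sInf_eq_zero]

lemma mex_singleton_one : mex ({1} : Set ℕ) = 0 := by
  rw [mex, Nat.sInf_eq_zero]
  left; simp

lemma mex_singleton_zero : mex ({0} : Set ℕ) = 1 := by
  have h : {n : ℕ | n ∉ ({0} : Set ℕ)} = Set.Ici 1 := by
    ext n; simp [Nat.one_le_iff_ne_zero]
  rw [mex, h]
  exact csInf_Ici

lemma key {α : Type*} [Fintype α] [DecidableEq α] (𝒦 : Set (Set α)) (W : Set α)
    (hWex : W ⊆ extremePoints 𝒦 Set.univ) :
    ∀ n (P : Finset α), Pᶜ.card = n → (∃ w ∈ W, w ∉ P) →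
      nimVal (fun P : Finset α => ¬ W ⊆ convexClosure 𝒦 ↑P) P =
        if Even n then 1 else 0 := by
  intro n
  induction n using Nat.strong_induction_on with
  | _ n ih =>
    intro P hn hleg
    obtain ⟨w, hwW, hwP⟩ := hleg
    have hwc : w ∈ Pᶜ := Finset.mem_compl.mpr hwP
    have hn1 : 1 ≤ n := by
      rw [← hn]
      exact Finset.card_pos.mpr ⟨w, hwc⟩
    rw [nimVal]
    rcases Nat.lt_or_ge n 2 with h2 | h2
    · have hne : n = 1 := le_antisymm (by omega) hn1
      have hPc : Pᶜ = {w} := by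
        rw [Finset.eq_singleton_iff_unique_mem]
        refine ⟨hwc, ?_⟩
        intro y hy
        by_contra hyw
        have : 2 ≤ Pᶜ.card := Finset.one_lt_card.mpr ⟨y, hy, w, hwc, hyw⟩
        omega
      have hset : {k | ∃ x, ∃ _ : x ∉ P,
          (¬ W ⊆ convexClosure 𝒦 ↑(insert x P)) ∧
          k = nimVal (fun P : Finset α => ¬ W ⊆ convexClosure 𝒦 ↑P) (insert x P)} = ∅ := by
        ext k
        simp only [Set.mem_setOf_eq, Set.mem_empty_iff_false, iff_false]
        rintro ⟨x, hx, hlegx, -⟩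
        have hxw : x = w := by
          have : x ∈ Pᶜ := Finset.mem_compl.mpr hx
          rw [hPc, Finset.mem_singleton] at this
          exact this
        rw [legal_iff 𝒦 W hWex] at hlegx
        obtain ⟨w', hw'W, hw'⟩ := hlegx
        simp only [Finset.mem_insert, not_or] at hw'
        have : w' ∈ Pᶜ := Finset.mem_compl.mpr hw'.2
        rw [hPc, Finset.mem_singleton] at this
        exact hw'.1 (hxw ▸ this)
      rw [hset, mex_empty, hne]
      simp
    · -- n ≥ 2
      obtain ⟨x, hxc, hxw⟩ : ∃ x ∈ Pᶜ, x ≠ w := by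
        obtain ⟨y, hy⟩ := Finset.card_pos.mp (show 0 < (Pᶜ.erase w).card by
          rw [Finset.card_erase_of_mem hwc]; omega)
        exact ⟨y, Finset.mem_of_mem_erase hy, Finset.ne_of_mem_erase hy⟩
      have hc : (if Even (n - 1) then (1:ℕ) else 0) = if Even n then 0 else 1 := by
        simp only [Nat.even_iff]
        split_ifs <;> omega
      have hset : {k | ∃ x, ∃ _ : x ∉ P,
          (¬ W ⊆ convexClosure 𝒦 ↑(insert x P)) ∧
          k = nimVal (fun P : Finset α => ¬ W ⊆ convexClosure 𝒦 ↑P) (insert x P)} =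
          {if Even (n-1) then 1 else 0} := by
        ext k
        simp only [Set.mem_setOf_eq, Set.mem_singleton_iff]
        constructor
        · rintro ⟨y, hy, hlegy, rfl⟩
          have hyc : y ∈ Pᶜ := Finset.mem_compl.mpr hy
          have hcard : (insert y P)ᶜ.card = n - 1 := by
            rw [Finset.compl_insert, Finset.card_erase_of_mem hyc, hn]
          rw [legal_iff 𝒦 W hWex] at hlegy
          exact ih (n-1) (by omega) _ hcard hlegy
        · rintro rfl
          refine ⟨x, Finset.mem_compl.mp hxc, ?_, ?_⟩
          · rw [legal_iff 𝒦 W hWex]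
            exact ⟨w, hwW, by simp [Finset.mem_insert, hxw.symm, hwP]⟩
          · have hcard : (insert x P)ᶜ.card = n - 1 := by
              rw [Finset.compl_insert, Finset.card_erase_of_mem hxc, hn]
            refine (ih (n-1) (by omega) _ hcard ?_).symm
            exact ⟨w, hwW, by simp [Finset.mem_insert, hxw.symm, hwP]⟩
      rw [hset, hc]
      by_cases he : Even n
      · simp [he, mex_singleton_zero]
      · simp [he, mex_singleton_one]

/-- For `DNG(S, W)` on a convex geometry with `W ⊆ Ex(S)` nonempty (legal positions are
those `P` with `W ⊄ τ(P)`), the nim number of the game is `1` if `|S|` is even and `0`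
if `|S|` is odd; equivalently the first player wins iff `|S|` is even. -/
theorem nim_of_extreme_winning_set {α : Type*} [Fintype α] [DecidableEq α]
    (𝒦 : Set (Set α))
    (h1 : Set.univ ∈ 𝒦)
    (h2 : ∀ K L, K ∈ 𝒦 → L ∈ 𝒦 → K ∩ L ∈ 𝒦)
    (h3 : ∀ K ∈ 𝒦, K ≠ Set.univ → ∃ a ∉ K, K ∪ {a} ∈ 𝒦)
    (W : Set α) (hW : W.Nonempty) (hWex : W ⊆ extremePoints 𝒦 Set.univ) :
    nimVal (fun P : Finset α => ¬ W ⊆ convexClosure 𝒦 ↑P) ∅ =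
      (if Even (Fintype.card α) then 1 else 0) ∧
    (nimVal (fun P : Finset α => ¬ W ⊆ convexClosure 𝒦 ↑P) ∅ ≠ 0 ↔
      Even (Fintype.card α)) := by
  obtain ⟨w, hwW⟩ := hW
  have h := key 𝒦 W hWex (Fintype.card α) ∅ (by simp) ⟨w, hwW, Finset.notMem_empty w⟩
  refine ⟨h, ?_⟩
  rw [h]
  by_cases he : Even (Fintype.card α)
  · simp [he]
  · simp [he]
end

section
/- Let T be a finite tree with vertex set S, W ⊆ S with |W| ≥ 2, and for each extreme point w ∈ Ex(W) let M_w be the vertex set of the unique component of T \ w containing W \ {w}, and V_w := S \ M_w. Then the sets {V_w : w ∈ Ex(W)} are pairwise disjoint. -/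
/-- The vertex geometry of a graph. -/
def vertexGeometry {α : Type*} (G : SimpleGraph α) : Set (Set α) :=
  {A | A = ∅ ∨ (G.induce A).Connected}

/-- The set of extreme points of `W` in the vertex geometry of `G`. -/
def treeExtremePoints {α : Type*} (G : SimpleGraph α) (W : Set α) : Set α :=
  {w | w ∈ W ∧ w ∉ convexClosure (vertexGeometry G) (W \ {w})}

/-!
Let `w₁ ≠ w₂` be extreme points and `x` any vertex. Following a path from `x` to `w₁` up to its
first visit of `{w₁, w₂}` gives a walk from `x` to one of them, say `wᵢ`, avoiding the other one, `wⱼ`. Since `wᵢ ∈ W \ {wⱼ} ⊆ M wⱼ` and `M wⱼ` is a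
component of `T \ wⱼ`, this walk puts `x` into `M wⱼ`, so `x ∉ V wⱼ`.
-/

namespace SimpleGraph

variable {V : Type*} {G : SimpleGraph V}

theorem ConnectedComponent.mem_image_val_supp_of_walk {s : Set V}
    (C : (G.induce s).ConnectedComponent) {x y : V} (p : G.Walk x y)
    (hp : ∀ v ∈ p.support, v ∈ s) (hy : y ∈ Subtype.val '' C.supp) :
    x ∈ Subtype.val '' C.supp := by
  obtain ⟨y', hy'C, rfl⟩ := hy
  refine ⟨⟨x, hp x p.start_mem_support⟩, ?_, rfl⟩
  rw [ConnectedComponent.mem_supp_iff] at hy'C ⊢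
  rw [← hy'C]
  exact ConnectedComponent.sound ⟨p.induce s hp⟩

theorem Preconnected.exists_walk_notMem_support_or (hG : G.Preconnected) (x : V) {a b : V}
    (hab : a ≠ b) :
    (∃ p : G.Walk x a, b ∉ p.support) ∨ ∃ p : G.Walk x b, a ∉ p.support := by
  classical
  obtain ⟨p⟩ := hG x a
  by_cases hb : b ∈ p.bypass.support
  · exact .inr ⟨p.bypass.takeUntil b hb,
      Walk.endpoint_notMem_support_takeUntil p.bypass_isPath hb hab⟩
  · exact .inl ⟨p.bypass, hb⟩

end SimpleGraph

theorem complements_pairwise_disjoint_general {α : Type*}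
    (G : SimpleGraph α) (hconn : G.Connected)
    (W : Set α)
    (M : α → Set α)
    (hM : ∀ w ∈ treeExtremePoints G W,
      (∃ C : (G.induce {x : α | x ≠ w}).ConnectedComponent,
        M w = Subtype.val '' C.supp) ∧ W \ {w} ⊆ M w) :
    (treeExtremePoints G W).Pairwise fun w₁ w₂ =>
      Disjoint (Set.univ \ M w₁) (Set.univ \ M w₂) := by
  intro w₁ hw₁ w₂ hw₂ hne
  obtain ⟨⟨C₁, hC₁⟩, hWM₁⟩ := hM w₁ hw₁
  obtain ⟨⟨C₂, hC₂⟩, hWM₂⟩ := hM w₂ hw₂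
  have hw₂M₁ : w₂ ∈ M w₁ := hWM₁ ⟨hw₂.1, hne.symm⟩
  have hw₁M₂ : w₁ ∈ M w₂ := hWM₂ ⟨hw₁.1, hne⟩
  rw [Set.disjoint_left]
  rintro x ⟨-, hx₁⟩ ⟨-, hx₂⟩
  rcases hconn.preconnected.exists_walk_notMem_support_or x hne with ⟨p, hp⟩ | ⟨p, hp⟩
  · rw [hC₂] at hw₁M₂ hx₂
    exact hx₂ (C₂.mem_image_val_supp_of_walk p (fun v hv hvw => hp (hvw ▸ hv)) hw₁M₂)
  · rw [hC₁] at hw₂M₁ hx₁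
    exact hx₁ (C₁.mem_image_val_supp_of_walk p (fun v hv hvw => hp (hvw ▸ hv)) hw₂M₁)

/-- Let `T` be a finite tree with vertex set `S` and `W ⊆ S` with `|W| ≥ 2`. For each
extreme point `w` of `W`, let `M w` be the vertex set of the (unique) connected
component of `T \ w` containing `W \ {w}`, and `V w := S \ M w`. Then the sets
`V w`, for `w ∈ Ex(W)`, are pairwise disjoint. -/
theorem complements_pairwise_disjoint {α : Type*} [Fintype α]
    (G : SimpleGraph α) (hconn : G.Connected) (hacyc : G.IsAcyclic)
    (W : Set α) (hW : 2 ≤ W.ncard)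
    (M : α → Set α)
    (hM : ∀ w ∈ treeExtremePoints G W,
      (∃ C : (G.induce {x : α | x ≠ w}).ConnectedComponent,
        M w = Subtype.val '' C.supp) ∧ W \ {w} ⊆ M w) :
    (treeExtremePoints G W).Pairwise fun w₁ w₂ =>
      Disjoint (Set.univ \ M w₁) (Set.univ \ M w₂) :=
  complements_pairwise_disjoint_general G hconn W M hM
end
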